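/- arXiv:1701.07051 — 2 statements merged into one kernel-verified Lean document; each statement's English description precedes it below -/
import Mathlib

section
/- In a flow graph, if (e1,e2) and (e1,e3) are SESE regions with e2 ≠ e3 and e2 dominates e3, then (e2,e3) is a SESE region; in particular e3 postdominates e2. -/
variable {V : Type*}

/-- The path `p` traverses the edge `e`. -/
def Traverses (p : List V) (e : V × V) : Prop := e ∈ p.zip p.tail

/-- `p` is a directed path starting at `s`. -/
def IsPathFrom (E : V → V → Prop) (s : V) (p : List V) : Prop :=
  p.head? = some s ∧ p.Chain' E

/-- `p` is a directed path ending at `t`. -/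
def IsPathTo (E : V → V → Prop) (t : V) (p : List V) : Prop :=
  p.getLast? = some t ∧ p.Chain' E

/-- `p` is a directed path from `s` to `t`. -/
def IsSTPath (E : V → V → Prop) (s t : V) (p : List V) : Prop :=
  p.head? = some s ∧ p.getLast? = some t ∧ p.Chain' E

/-- `v` is a source: no incoming non-loop edges. -/
def IsSrcRel (E : V → V → Prop) (v : V) : Prop := ∀ u, u ≠ v → ¬E u v

/-- `v` is a target: no outgoing non-loop edges. -/
def IsTgtRel (E : V → V → Prop) (v : V) : Prop := ∀ u, u ≠ v → ¬E v u

/-- A flow graph: exactly one source `s` and one target `t`, a unique edge from `s`,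
a unique edge into `t`, and a path cover by source-to-target paths. -/
def IsFlowGraph (E : V → V → Prop) (s t : V) : Prop :=
  (∀ v, IsSrcRel E v ↔ v = s) ∧ (∀ v, IsTgtRel E v ↔ v = t) ∧
  (∃! x, E s x) ∧ (∃! x, E x t) ∧
  (∀ v, ∃ p : List V, IsSTPath E s t p ∧ v ∈ p)

/-- Edge `e` dominates edge `e'` (w.r.t. source `s`). -/
def EDom (E : V → V → Prop) (s : V) (e e' : V × V) : Prop :=
  ∀ p : List V, IsPathFrom E s p → Traverses p e' → Traverses p e

/-- Edge `e` postdominates edge `e'` (w.r.t. target `t`). -/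
def EPdom (E : V → V → Prop) (t : V) (e e' : V × V) : Prop :=
  ∀ p : List V, IsPathTo E t p → Traverses p e' → Traverses p e

/-- `c` is a (directed) cycle: the nonempty vertex list `c` together with the wrap-around
edge back to its head forms a closed chain. -/
def IsCycle (E : V → V → Prop) (c : List V) : Prop :=
  c ≠ [] ∧ List.Chain' E (c ++ c.take 1)

/-- The cycle `c` traverses edge `e` (including the wrap-around edge). -/
def CycTraverses (c : List V) (e : V × V) : Prop := Traverses (c ++ c.take 1) e

/-- `(e1, e2)` is a SESE (single-entry/single-exit) region: `e1` dominates `e2`, `e2`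
postdominates `e1`, and every cycle contains `e1` iff it contains `e2`. -/
def SESE (E : V → V → Prop) (s t : V) (e1 e2 : V × V) : Prop :=
  EDom E s e1 e2 ∧ EPdom E t e2 e1 ∧
  ∀ c : List V, IsCycle E c → (CycTraverses c e1 ↔ CycTraverses c e2)

/-!
If a path from `e₂` to `t` avoided `e₃`, prefixing it with any `s`-path `q` to the tail of `e₂`
would give a path through `e₂`, hence through `e₁` (dominance) and then through `e₃`
(postdominance). So `q` itself traverses `e₃`, hence `e₂`, and `q` has a strictly shorter prefix
ending at the tail of `e₂`. This infinite descent contradicts reachability from `s`. The cycle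
condition of `(e₂, e₃)` is just transitivity of `↔` through `e₁`.
-/

section Paths

variable {E : V → V → Prop} {s t : V}

theorem traverses_iff_exists_append {p : List V} {e : V × V} :
    Traverses p e ↔ ∃ l₁ l₂, p = l₁ ++ e.1 :: e.2 :: l₂ := by
  simp only [Traverses]
  induction p with
  | nil => simp
  | cons x xs ih =>
    cases xs with
    | nil =>
      simp only [List.tail_cons, List.zip_nil_right, List.not_mem_nil, false_iff]
      rintro ⟨l₁, l₂, h⟩
      rcases l₁ with _ | ⟨y, l₁⟩ <;> simp_all
    | cons y ys =>
      simp only [List.tail_cons, List.zip_cons_cons, List.mem_cons] at ih ⊢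
      rw [ih]
      constructor
      · rintro (rfl | ⟨l₁, l₂, h⟩)
        · exact ⟨[], ys, rfl⟩
        · exact ⟨x :: l₁, l₂, by simp [h]⟩
      · rintro ⟨_ | ⟨z, l₁⟩, l₂, h⟩
        · simp only [List.nil_append, List.cons.injEq] at h
          simp [h.1, h.2.1]
        · simp only [List.cons_append, List.cons.injEq] at h
          exact Or.inr ⟨l₁, l₂, h.2⟩

theorem traverses_append_cons {l l' : List V} {x : V} {e : V × V} :
    Traverses (l ++ x :: l') e ↔ Traverses (l ++ [x]) e ∨ Traverses (x :: l') e := by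
  simp only [Traverses, ← List.mem_append]
  congr! 1
  induction l with
  | nil => simp
  | cons y l ih =>
    cases l with
    | nil => simp
    | cons z l => simpa using ih

theorem IsPathFrom.append_cons {l l' : List V} {x : V} (hl : IsPathFrom E s (l ++ [x]))
    (hl' : (x :: l').IsChain E) : IsPathFrom E s (l ++ x :: l') := by
  refine ⟨?_, List.isChain_split.mpr ⟨hl.2, hl'⟩⟩
  rcases l with _ | ⟨y, l⟩ <;> simpa using hl.1

theorem IsPathFrom.prefix_of_append_cons {l l' : List V} {x : V}
    (h : IsPathFrom E s (l ++ x :: l')) : IsPathFrom E s (l ++ [x]) := by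
  refine ⟨?_, (List.isChain_split.mp h.2).1⟩
  rcases l with _ | ⟨y, l⟩ <;> simpa using h.1

theorem IsFlowGraph.exists_isPathFrom (hFG : IsFlowGraph E s t) (v : V) :
    ∃ l, IsPathFrom E s (l ++ [v]) := by
  obtain ⟨p, hp, hv⟩ := hFG.2.2.2.2 v
  obtain ⟨l, l', rfl⟩ := List.append_of_mem hv
  exact ⟨l, IsPathFrom.prefix_of_append_cons ⟨hp.1, hp.2.2⟩⟩

theorem not_isPathFrom_of_forall_traverses {e : V × V}
    (h : ∀ l, IsPathFrom E s (l ++ [e.1]) → Traverses (l ++ [e.1]) e) (l : List V) :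
    ¬ IsPathFrom E s (l ++ [e.1]) := by
  induction l using WellFounded.induction (measure List.length).wf with
  | _ l ih =>
  intro hl
  obtain ⟨l₁, l₂, hsplit⟩ := traverses_iff_exists_append.mp (h l hl)
  have hshorter : l₁.length < l.length := by
    have := congrArg List.length hsplit
    simp only [List.length_append, List.length_cons, List.length_nil] at this
    omega
  rw [hsplit] at hl
  exact ih l₁ hshorter hl.prefix_of_append_cons

theorem epdom_of_edom_of_epdom {e₁ e₂ e₃ : V × V} (h₁₂ : EDom E s e₁ e₂)
    (h₃₁ : EPdom E t e₃ e₁) (h₂₃ : EDom E s e₂ e₃)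
    (hreach : ∃ l, IsPathFrom E s (l ++ [e₂.1])) : EPdom E t e₃ e₂ := by
  intro p hp hp₂
  by_contra hp₃
  obtain ⟨l₁, l₂, rfl⟩ := traverses_iff_exists_append.mp hp₂
  have hsuffix₃ : ¬ Traverses (e₂.1 :: e₂.2 :: l₂) e₃ :=
    fun h ↦ hp₃ (traverses_append_cons.mpr (Or.inr h))
  have hsuffix : (e₂.1 :: e₂.2 :: l₂).IsChain E := (List.isChain_split.mp hp.2).2
  suffices ∀ q, IsPathFrom E s (q ++ [e₂.1]) → Traverses (q ++ [e₂.1]) e₂ by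
    obtain ⟨l, hl⟩ := hreach
    exact not_isPathFrom_of_forall_traverses this l hl
  intro q hq
  have hglue : IsPathFrom E s (q ++ e₂.1 :: e₂.2 :: l₂) := hq.append_cons hsuffix
  have hglue₂ : Traverses (q ++ e₂.1 :: e₂.2 :: l₂) e₂ :=
    traverses_iff_exists_append.mpr ⟨q, l₂, rfl⟩
  have hglue_to : IsPathTo E t (q ++ e₂.1 :: e₂.2 :: l₂) := ⟨by simpa using hp.1, hglue.2⟩
  have hglue₃ := h₃₁ _ hglue_to (h₁₂ _ hglue hglue₂)
  exact h₂₃ _ hq ((traverses_append_cons.mp hglue₃).resolve_right hsuffix₃)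

end Paths

theorem stmt9_general {V : Type*} (E : V → V → Prop) (s t : V)
    (hFG : IsFlowGraph E s t) (e1 e2 e3 : V × V)
    (h12 : SESE E s t e1 e2) (h13 : SESE E s t e1 e3)
    (hdom : EDom E s e2 e3) :
    SESE E s t e2 e3 ∧ EPdom E t e3 e2 := by
  have hpdom : EPdom E t e3 e2 :=
    epdom_of_edom_of_epdom h12.1 h13.2.1 hdom (hFG.exists_isPathFrom e2.1)
  exact ⟨⟨hdom, hpdom, fun c hc ↦ (h12.2.2 c hc).symm.trans (h13.2.2 c hc)⟩, hpdom⟩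

/-- In a flow graph, if `(e1,e2)` and `(e1,e3)` are SESE regions with `e2 ≠ e3` and
`e2` dominating `e3`, then `(e2,e3)` is a SESE region; in particular `e3` postdominates
`e2`. -/
theorem stmt9 {V : Type*} [Fintype V] (E : V → V → Prop) (s t : V)
    (hFG : IsFlowGraph E s t) (e1 e2 e3 : V × V)
    (h12 : SESE E s t e1 e2) (h13 : SESE E s t e1 e3)
    (hne : e2 ≠ e3) (hdom : EDom E s e2 e3) :
    SESE E s t e2 e3 ∧ EPdom E t e3 e2 :=
  stmt9_general E s t hFG e1 e2 e3 h12 h13 hdom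
end

section
/- Define a digraph S on the edges of a flow graph by putting an arc from e1 to e2 whenever (e1,e2) is a nondegenerate SESE region. Then every weakly connected component of S (with at least one arc) is a transitive tournament; in particular it has a unique source, a unique target, and a unique length-1 path from its source to its target. -/
variable {V : Type*}

/-- The arc relation of the digraph `S` on the edges of the flow graph: an arc from `e`
to `e'` whenever `(e, e')` is a nondegenerate SESE region (between actual edges). -/
def SArc (E : V → V → Prop) (s t : V) (e e' : V × V) : Prop :=
  E e.1 e.2 ∧ E e'.1 e'.2 ∧ e ≠ e' ∧ SESE E s t e e'

/-- Weak connectivity: the reflexive-transitive closure of the symmetrization. -/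
def WConn {α : Type*} (R : α → α → Prop) : α → α → Prop :=
  Relation.ReflTransGen (fun a b => R a b ∨ R b a)

/-!
An arc of `S` joins cycle-equivalent edges (every `s`-`t` path and every cycle traverses both
or neither), so a weakly connected component consists of pairwise cycle-equivalent edges.
Two distinct cycle-equivalent edges are joined by an arc: gluing a path from `s` to a path to `t`
at one of them shows that each of the two dominates or postdominates the other, and
(post)dominance between distinct traversable edges is antisymmetric. SESE regions compose, so
`S` is a strict order, total on the component. The component lies on any `s`-`t` path through
one of its edges, hence is finite, and its least and greatest elements are the source and the
target.
-/

section Traverses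

variable {p q l₁ l₂ : List V} {v : V} {e : V × V}

theorem traverses_iff_not_isChain : Traverses p e ↔ ¬ p.IsChain (fun x y => (x, y) ≠ e) := by
  induction p using List.twoStepInduction with
  | nil | singleton => simp [Traverses]
  | cons_cons x y l _ ih =>
    simp only [Traverses, List.tail_cons, List.zip_cons_cons, List.mem_cons] at ih ⊢
    rw [ih, List.isChain_cons_cons]
    tauto

theorem traverses_iff_eq_append :
    Traverses p e ↔ ∃ l₁ l₂, p = l₁ ++ e.1 :: e.2 :: l₂ := by
  rw [traverses_iff_not_isChain, List.isChain_iff_forall_rel_of_append_cons_cons]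
  push Not
  constructor
  · rintro ⟨a, b, l₁, l₂, rfl, rfl⟩
    exact ⟨l₁, l₂, rfl⟩
  · rintro ⟨l₁, l₂, rfl⟩
    exact ⟨_, _, l₁, l₂, rfl, rfl⟩

theorem traverses_append_cons_cons : Traverses (l₁ ++ e.1 :: e.2 :: l₂) e :=
  traverses_iff_eq_append.2 ⟨l₁, l₂, rfl⟩

theorem Traverses.of_append_cons (h : Traverses (l₁ ++ v :: l₂) e) :
    Traverses (l₁ ++ [v]) e ∨ Traverses (v :: l₂) e := by
  rw [traverses_iff_not_isChain, List.isChain_split] at h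
  simp only [traverses_iff_not_isChain]
  tauto

theorem Traverses.mono (h : Traverses q e) (hqp : q <:+: p) : Traverses p e := by
  rw [traverses_iff_not_isChain] at h ⊢
  exact fun hp => h (hp.infix hqp)

theorem traverses_reverse : Traverses p.reverse e.swap ↔ Traverses p e := by
  simp only [traverses_iff_not_isChain, List.isChain_reverse, ne_eq, Prod.ext_iff, Prod.fst_swap,
    Prod.snd_swap, and_comm]

end Traverses

section Paths

variable {E : V → V → Prop} {s t : V} {p q l₁ l₂ : List V} {x y v : V} {a b : V × V}

theorem IsPathFrom.prefix (hp : IsPathFrom E s p) (hqp : q <+: p) (hq : q ≠ []) :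
    IsPathFrom E s q := by
  obtain ⟨r, rfl⟩ := hqp
  obtain ⟨x, q, rfl⟩ := List.exists_cons_of_ne_nil hq
  exact ⟨by simpa using hp.1, hp.2.prefix ⟨r, rfl⟩⟩

theorem IsPathTo.suffix (hp : IsPathTo E t p) (hqp : q <:+ p) (hq : q ≠ []) :
    IsPathTo E t q := by
  obtain ⟨r, rfl⟩ := hqp
  exact ⟨by rw [← hp.1, List.getLast?_append_of_ne_nil _ hq], hp.2.suffix ⟨r, rfl⟩⟩

theorem IsSTPath.isPathFrom (h : IsSTPath E s t p) : IsPathFrom E s p := ⟨h.1, h.2.2⟩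

theorem IsSTPath.isPathTo (h : IsSTPath E s t p) : IsPathTo E t p := ⟨h.2.1, h.2.2⟩

theorem IsPathTo.cons (hxy : E x y) (hp : IsPathTo E t (y :: l₁)) :
    IsPathTo E t (x :: y :: l₁) :=
  ⟨by simpa using hp.1, List.IsChain.cons_cons hxy hp.2⟩

theorem isSTPath_append_cons (hp : IsPathFrom E s (l₁ ++ [v])) (hq : IsPathTo E t (v :: l₂)) :
    IsSTPath E s t (l₁ ++ v :: l₂) :=
  ⟨by cases l₁ <;> simpa using hp.1, by rw [List.getLast?_append_cons]; exact hq.1,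
    List.isChain_split.2 ⟨hp.2, hq.2⟩⟩

theorem isPathTo_iff_isPathFrom_reverse : IsPathTo E t p ↔ IsPathFrom (flip E) t p.reverse := by
  rw [IsPathTo, IsPathFrom, List.head?_reverse]
  exact and_congr_right' List.isChain_reverse.symm

theorem epdom_iff_edom_flip : EPdom E t a b ↔ EDom (flip E) t a.swap b.swap :=
  (List.reverse_involutive.toPerm _).forall_congr fun {_} => by
    simp only [isPathTo_iff_isPathFrom_reverse, Function.Involutive.coe_toPerm, traverses_reverse]

theorem EDom.antisymm (hab : EDom E s a b) (hba : EDom E s b a)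
    (hb : ∃ p, IsPathFrom E s p ∧ Traverses p b) : a = b := by
  -- cutting a shortest path from `s` through `b` after `a`, then after `b`, cannot shorten it
  obtain ⟨p, ⟨hp, hpb⟩, hmin⟩ :=
    (measure List.length).wf.has_min {p | IsPathFrom E s p ∧ Traverses p b} hb
  obtain ⟨l₁, l₂, rfl⟩ := traverses_iff_eq_append.1 (hab p hp hpb)
  have hq : IsPathFrom E s (l₁ ++ [a.1, a.2]) := hp.prefix ⟨l₂, by simp⟩ (by simp)
  obtain ⟨m₁, m₂, hm⟩ := traverses_iff_eq_append.1 (hba _ hq traverses_append_cons_cons)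
  have hr : IsPathFrom E s (m₁ ++ [b.1, b.2]) := hq.prefix ⟨m₂, by simp [hm]⟩ (by simp)
  have hlen : ¬ (m₁ ++ [b.1, b.2]).length < (l₁ ++ a.1 :: a.2 :: l₂).length :=
    hmin _ ⟨hr, traverses_append_cons_cons⟩
  have hm₂ : m₂ = [] := by
    have := congrArg List.length hm
    simp only [List.length_append, List.length_cons, List.length_nil] at hlen this
    rw [← List.length_eq_zero_iff]
    omega
  subst hm₂
  have := List.append_inj_right' hm (by simp)
  simp only [List.cons.injEq, and_true] at this
  exact Prod.ext this.1 this.2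

theorem EPdom.antisymm (hab : EPdom E t a b) (hba : EPdom E t b a)
    (hb : ∃ p, IsPathTo E t p ∧ Traverses p b) : a = b := by
  obtain ⟨p, hp, hpb⟩ := hb
  refine Prod.swap_injective ((epdom_iff_edom_flip.1 hab).antisymm (epdom_iff_edom_flip.1 hba) ?_)
  exact ⟨p.reverse, isPathTo_iff_isPathFrom_reverse.1 hp, traverses_reverse.2 hpb⟩

end Paths

section Order

variable {α : Type*} {r : α → α → Prop} {P : α → Prop}

theorem existsUnique_minimal_of_total [IsStrictOrder α r] (hfin : {a | P a}.Finite)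
    (hne : ∃ a, P a) (htot : ∀ a b, P a → P b → a ≠ b → r a b ∨ r b a) :
    ∃! a, P a ∧ ∀ b, P b → ¬ r b a := by
  obtain ⟨m, hm, hmin⟩ :=
    (Set.wellFoundedOn_iff.1 (hfin.wellFoundedOn (r := r))).has_min {a | P a} hne
  refine ⟨m, ⟨hm, fun b hb hbm => hmin b hb ⟨hbm, hb, hm⟩⟩, fun a ⟨ha, hamin⟩ => ?_⟩
  by_contra ham
  rcases htot a m ha hm ham with h | h
  · exact hmin a ha ⟨h, ha, hm⟩
  · exact hamin m hm h

theorem rel_of_minimal_of_maximal {x y a b : α}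
    (htot : ∀ a b, P a → P b → a ≠ b → r a b ∨ r b a) (hx : P x) (hy : P y) (hxy : x ≠ y)
    (ha : P a ∧ ∀ c, P c → ¬ r c a)
    (hb : P b ∧ ∀ c, P c → ¬ r b c) : r a b := by
  have hab : a ≠ b := by
    rintro rfl
    have hall : ∀ c, P c → c = a := fun c hc =>
      by_contra fun hca => (htot c a hc ha.1 hca).elim (ha.2 c hc) (hb.2 c hc)
    exact hxy ((hall x hx).trans (hall y hy).symm)
  exact (htot a b ha.1 hb.1 hab).resolve_right (ha.2 b hb.1)

end Order

section FlowGraph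

variable {E : V → V → Prop} {s t : V} {e₀ a b c : V × V}

theorem IsFlowGraph.exists_isSTPath_traverses (hFG : IsFlowGraph E s t) (he : E a.1 a.2) :
    ∃ p, IsSTPath E s t p ∧ Traverses p a := by
  obtain ⟨p, hp, hp₁⟩ := hFG.2.2.2.2 a.1
  obtain ⟨q, hq, hq₂⟩ := hFG.2.2.2.2 a.2
  obtain ⟨l₁, l₂, rfl⟩ := List.append_of_mem hp₁
  obtain ⟨m₁, m₂, rfl⟩ := List.append_of_mem hq₂
  have hp' : IsPathFrom E s (l₁ ++ [a.1]) := hp.isPathFrom.prefix ⟨l₂, by simp⟩ (by simp)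
  have hq' : IsPathTo E t (a.2 :: m₂) := hq.isPathTo.suffix ⟨m₁, rfl⟩ (by simp)
  exact ⟨_, isSTPath_append_cons hp' (hq'.cons he), traverses_append_cons_cons⟩

theorem edom_or_epdom_of_forall_isSTPath
    (h : ∀ p, IsSTPath E s t p → Traverses p a → Traverses p b) :
    EDom E s b a ∨ EPdom E t b a := by
  by_contra! hn
  simp only [EDom, EPdom, not_forall] at hn
  obtain ⟨⟨p, hp, hpa, hpb⟩, ⟨q, hq, hqa, hqb⟩⟩ := hn
  obtain ⟨l₁, l₂, rfl⟩ := traverses_iff_eq_append.1 hpa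
  obtain ⟨m₁, m₂, rfl⟩ := traverses_iff_eq_append.1 hqa
  have hglued : IsSTPath E s t (l₁ ++ a.1 :: a.2 :: m₂) :=
    isSTPath_append_cons (hp.prefix ⟨a.2 :: l₂, by simp⟩ (by simp))
      (hq.suffix ⟨m₁, rfl⟩ (by simp))
  rcases (h _ hglued traverses_append_cons_cons).of_append_cons with hb | hb
  · exact hpb (hb.mono ⟨[], a.2 :: l₂, by simp⟩)
  · exact hqb (hb.mono ⟨m₁, [], by simp⟩)

/-- Cycle equivalence of edges; the `s`-`t` paths play the role of the cycles through the
back edge `t → s` that the paper adds to the flow graph. -/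
def CycleEquiv (E : V → V → Prop) (s t : V) (a b : V × V) : Prop :=
  (∀ p, IsSTPath E s t p → (Traverses p a ↔ Traverses p b)) ∧
    ∀ c, IsCycle E c → (CycTraverses c a ↔ CycTraverses c b)

theorem CycleEquiv.refl (a : V × V) : CycleEquiv E s t a a :=
  ⟨fun _ _ => .rfl, fun _ _ => .rfl⟩

theorem CycleEquiv.symm (h : CycleEquiv E s t a b) : CycleEquiv E s t b a :=
  ⟨fun p hp => (h.1 p hp).symm, fun c hc => (h.2 c hc).symm⟩

theorem CycleEquiv.trans (hab : CycleEquiv E s t a b) (hbc : CycleEquiv E s t b c) :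
    CycleEquiv E s t a c :=
  ⟨fun p hp => (hab.1 p hp).trans (hbc.1 p hp), fun c hc => (hab.2 c hc).trans (hbc.2 c hc)⟩

theorem SESE.cycleEquiv (h : SESE E s t a b) : CycleEquiv E s t a b :=
  ⟨fun p hp => ⟨h.2.1 p hp.isPathTo, h.1 p hp.isPathFrom⟩, h.2.2⟩

theorem SESE.trans (hab : SESE E s t a b) (hbc : SESE E s t b c) : SESE E s t a c :=
  ⟨fun p hp h => hab.1 p hp (hbc.1 p hp h), fun p hp h => hbc.2.1 p hp (hab.2.1 p hp h),
    fun c hc => (hab.2.2 c hc).trans (hbc.2.2 c hc)⟩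

theorem CycleEquiv.sarc_or_sarc (hFG : IsFlowGraph E s t) (ha : E a.1 a.2) (hb : E b.1 b.2)
    (hne : a ≠ b) (h : CycleEquiv E s t a b) : SArc E s t a b ∨ SArc E s t b a := by
  obtain ⟨p, hp, hpb⟩ := hFG.exists_isSTPath_traverses hb
  rcases edom_or_epdom_of_forall_isSTPath fun p hp => (h.1 p hp).1 with hba | hba <;>
    rcases edom_or_epdom_of_forall_isSTPath fun p hp => (h.1 p hp).2 with hab | hab
  · exact absurd (hab.antisymm hba ⟨p, hp.isPathFrom, hpb⟩) hne
  · exact Or.inr ⟨hb, ha, hne.symm, hba, hab, h.symm.2⟩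
  · exact Or.inl ⟨ha, hb, hne, hab, hba, h.2⟩
  · exact absurd (hab.antisymm hba ⟨p, hp.isPathTo, hpb⟩) hne

theorem SArc.trans (hFG : IsFlowGraph E s t) (hab : SArc E s t a b) (hbc : SArc E s t b c) :
    SArc E s t a c := by
  refine ⟨hab.1, hbc.2.1, ?_, hab.2.2.2.trans hbc.2.2.2⟩
  rintro rfl
  obtain ⟨p, hp, hpb⟩ := hFG.exists_isSTPath_traverses hab.2.1
  exact hab.2.2.1 (hab.2.2.2.1.antisymm hbc.2.2.2.1 ⟨p, hp.isPathFrom, hpb⟩)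

theorem sarc_isStrictOrder (hFG : IsFlowGraph E s t) : IsStrictOrder (V × V) (SArc E s t) where
  irrefl _ h := h.2.2.1 rfl
  trans _ _ _ := SArc.trans hFG

theorem WConn.sarc_cycleEquiv (he₀ : E e₀.1 e₀.2) (h : WConn (SArc E s t) e₀ a) :
    E a.1 a.2 ∧ CycleEquiv E s t e₀ a := by
  induction h with
  | refl => exact ⟨he₀, .refl _⟩
  | tail _ hbc ih =>
    rcases hbc with h | h
    · exact ⟨h.2.1, ih.2.trans h.2.2.2.cycleEquiv⟩
    · exact ⟨h.1, ih.2.trans h.2.2.2.cycleEquiv.symm⟩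

theorem sarc_total_of_wConn (hFG : IsFlowGraph E s t) (he₀ : E e₀.1 e₀.2) (a b : V × V)
    (ha : WConn (SArc E s t) e₀ a) (hb : WConn (SArc E s t) e₀ b) (hne : a ≠ b) :
    SArc E s t a b ∨ SArc E s t b a :=
  have ⟨ha', hca⟩ := ha.sarc_cycleEquiv he₀
  have ⟨hb', hcb⟩ := hb.sarc_cycleEquiv he₀
  (hca.symm.trans hcb).sarc_or_sarc hFG ha' hb' hne

theorem finite_setOf_wConn_sarc (hFG : IsFlowGraph E s t) (he₀ : E e₀.1 e₀.2) :
    {a | WConn (SArc E s t) e₀ a}.Finite := by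
  obtain ⟨p, hp, hpe⟩ := hFG.exists_isSTPath_traverses he₀
  exact (p.zip p.tail).finite_toSet.subset fun a ha => ((ha.sarc_cycleEquiv he₀).2.1 p hp).1 hpe

end FlowGraph

theorem stmt12_general {V : Type*} (E : V → V → Prop) (s t : V)
    (hFG : IsFlowGraph E s t) (e0 : V × V)
    (harc : ∃ e', SArc E s t e0 e' ∨ SArc E s t e' e0) :
    (∀ a b, WConn (SArc E s t) e0 a → WConn (SArc E s t) e0 b → a ≠ b →
      (SArc E s t a b ∨ SArc E s t b a) ∧ ¬(SArc E s t a b ∧ SArc E s t b a)) ∧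
    (∀ a b c, WConn (SArc E s t) e0 a → WConn (SArc E s t) e0 b →
      WConn (SArc E s t) e0 c → SArc E s t a b → SArc E s t b c → SArc E s t a c) ∧
    (∃! a, WConn (SArc E s t) e0 a ∧ ∀ b, WConn (SArc E s t) e0 b → ¬SArc E s t b a) ∧
    (∃! b, WConn (SArc E s t) e0 b ∧ ∀ a, WConn (SArc E s t) e0 a → ¬SArc E s t b a) ∧
    (∀ a b, (WConn (SArc E s t) e0 a ∧ ∀ c, WConn (SArc E s t) e0 c → ¬SArc E s t c a) →
      (WConn (SArc E s t) e0 b ∧ ∀ c, WConn (SArc E s t) e0 c → ¬SArc E s t b c) →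
      SArc E s t a b) := by
  obtain ⟨e₁, h₀₁⟩ := harc
  have he₀ : E e0.1 e0.2 := h₀₁.elim (·.1) (·.2.1)
  have hne₀₁ : e0 ≠ e₁ := h₀₁.elim (·.2.2.1) (·.2.2.1.symm)
  have := sarc_isStrictOrder hFG
  have htot := sarc_total_of_wConn hFG he₀
  have hfin := finite_setOf_wConn_sarc hFG he₀
  have hne : ∃ a, WConn (SArc E s t) e0 a := ⟨e0, .refl⟩
  refine ⟨fun a b ha hb hab => ⟨htot a b ha hb hab, fun h => asymm h.1 h.2⟩,
    fun a b c _ _ _ => _root_.trans, existsUnique_minimal_of_total hfin hne htot,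
    existsUnique_minimal_of_total (r := Function.swap (SArc E s t)) hfin hne
      fun a b ha hb hab => (htot a b ha hb hab).symm,
    fun a b => rel_of_minimal_of_maximal htot .refl (.single h₀₁) hne₀₁⟩

/-- Every weakly connected component of `S` containing at least one arc is a transitive
tournament; in particular it has a unique source, a unique target, and the unique
length-1 path from its source to its target (an arc from the source to the target). -/
theorem stmt12 {V : Type*} [Fintype V] (E : V → V → Prop) (s t : V)
    (hFG : IsFlowGraph E s t) (e0 : V × V)
    (harc : ∃ e', SArc E s t e0 e' ∨ SArc E s t e' e0) :
    (∀ a b, WConn (SArc E s t) e0 a → WConn (SArc E s t) e0 b → a ≠ b →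
      (SArc E s t a b ∨ SArc E s t b a) ∧ ¬(SArc E s t a b ∧ SArc E s t b a)) ∧
    (∀ a b c, WConn (SArc E s t) e0 a → WConn (SArc E s t) e0 b →
      WConn (SArc E s t) e0 c → SArc E s t a b → SArc E s t b c → SArc E s t a c) ∧
    (∃! a, WConn (SArc E s t) e0 a ∧ ∀ b, WConn (SArc E s t) e0 b → ¬SArc E s t b a) ∧
    (∃! b, WConn (SArc E s t) e0 b ∧ ∀ a, WConn (SArc E s t) e0 a → ¬SArc E s t b a) ∧
    (∀ a b, (WConn (SArc E s t) e0 a ∧ ∀ c, WConn (SArc E s t) e0 c → ¬SArc E s t c a) →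
      (WConn (SArc E s t) e0 b ∧ ∀ c, WConn (SArc E s t) e0 c → ¬SArc E s t b c) →
      SArc E s t a b) :=
  stmt12_general E s t hFG e0 harc
end
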